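/- Let K be a field, c ≥ 0, and let φ: G → F be a morphism of finitely generated free OI-modules over P = P^{OI,c}. Then the kernel of φ (the OI-submodule of G whose width-n component is ker φ_n) is generated by a finite subset, and such a finite generating set can be computed in finitely many steps. -/

import Mathlib

open MvPolynomial

/-- The width-`n` component `P^{OI,c}_n = K[x_{i,j} : i ∈ [c], j ∈ [n]]` of the
polynomial OI-algebra `P^{OI,c}`. -/
abbrev POI (K : Type) [Field K] (c n : ℕ) := MvPolynomial (Fin c × Fin n) K

/-- The structure map `P^{OI,c}(ε) : P^{OI,c}_m → P^{OI,c}_n`, `x_{i,j} ↦ x_{i,ε(j)}`,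
for an OI-morphism `ε : [m] ↪o [n]`. -/
noncomputable def POImap (K : Type) [Field K] (c : ℕ) {m n : ℕ}
    (ε : Fin m ↪o Fin n) : POI K c m →ₐ[K] POI K c n :=
  MvPolynomial.rename (fun p => (p.1, ε p.2))

/-- Width-`n` component of the finitely generated free OI-module
`⊕_{i=1}^r F^{OI,d_i}` over `P^{OI,c}`. -/
abbrev FreeOI (K : Type) [Field K] (c : ℕ) {r : ℕ} (d : Fin r → ℕ) (n : ℕ) : Type :=
  (Σ i : Fin r, Fin (d i) ↪o Fin n) →₀ POI K c n

/-- The structure map of the free OI-module `⊕ F^{OI,d_i}` along an OI-morphism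
`ε : [m] ↪o [n]`: `a e_{π,i} ↦ P^{OI,c}(ε)(a) e_{ε∘π,i}`. -/
noncomputable def freeOIMap (K : Type) [Field K] (c : ℕ) {r : ℕ} (d : Fin r → ℕ)
    {m n : ℕ} (ε : Fin m ↪o Fin n) (f : FreeOI K c d m) : FreeOI K c d n :=
  f.sum fun p a => Finsupp.single ⟨p.1, p.2.trans ε⟩ (POImap K c ε a)

/-!
The kernel of `φ` is an OI-submodule of `G`, so it suffices that every OI-submodule `N` of a
finitely generated free OI-module is finitely generated. Order the monomials `x^u e_π` of each
width so that every OI-map and every multiplication by a monomial is strictly monotone. Encoding a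
monomial of width `n` as a word of length `n` over the well-quasi-ordered alphabet `Bool × ℕ^c`
(whether `j` lies in the image of `π`, and the exponents of the variables `x_{i,j}`), Higman's
lemma shows that OI-divisibility of monomials is a well-quasi-order. Hence finitely many leading
monomials of elements of `N` OI-divide all the others, and elements of `N` realising them generate
`N`: the leading term of any element of `N` is cancelled by a monomial multiple of an OI-image of
one of them, and the monomial order is well-founded.
-/

theorem WellQuasiOrdered.exists_finset_forall_exists_rel {α : Type*} {r : α → α → Prop}
    (hr : WellQuasiOrdered r) (s : Set α) :
    ∃ F : Finset α, ↑F ⊆ s ∧ ∀ t ∈ s, ∃ a ∈ F, r a t := by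
  by_contra! h
  obtain ⟨f, -, hbad⟩ := exists_seq_of_forall_finset_exists (· ∈ s) (fun a b => ¬ r a b) h
  obtain ⟨m, n, hmn, hrel⟩ := hr f
  exact hbad m n hmn hrel

theorem List.SublistForall₂.exists_orderEmbedding_of_ofFn {α β : Type*} {R : α → β → Prop}
    {m n : ℕ} {f : Fin m → α} {g : Fin n → β} (h : SublistForall₂ R (ofFn f) (ofFn g)) :
    ∃ ε : Fin m ↪o Fin n, ∀ j, R (f j) (g (ε j)) := by
  obtain ⟨l, hfl, hl⟩ := sublistForall₂_iff.1 h
  obtain ⟨e, he⟩ := sublist_iff_exists_fin_orderEmbedding_get_eq.1 hl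
  have hm : m = l.length := by simpa using hfl.length_eq
  have hn : (ofFn g).length = n := length_ofFn
  refine ⟨(Fin.castOrderIso hm).toOrderEmbedding.trans
    (e.trans (Fin.castOrderIso hn).toOrderEmbedding), fun j => ?_⟩
  have hR := (forall₂_iff_get.1 hfl).2 j (by simp) (hm ▸ j.isLt)
  have hj := he ⟨j, hm ▸ j.isLt⟩
  simp only [get_eq_getElem, List.getElem_ofFn] at hR hj
  rw [hj] at hR
  exact hR

theorem OrderEmbedding.eq_of_range_subset {k n : ℕ} {ρ σ : Fin k ↪o Fin n}
    (h : Set.range ρ ⊆ Set.range σ) : ρ = σ :=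
  OrderEmbedding.range_inj.1 <| Set.eq_of_subset_of_ncard_le h
    (by rw [Set.ncard_range_of_injective ρ.injective, Set.ncard_range_of_injective σ.injective])
    (Set.toFinite _)

theorem Finset.max_image_of_monotone {α β : Type*} [LinearOrder α] [LinearOrder β] {f : α → β}
    (hf : Monotone f) (s : Finset α) : (s.image f).max = s.max.map f := by
  rcases s.eq_empty_or_nonempty with rfl | hs
  · simp
  · rw [← coe_max' hs, ← coe_max' (hs.image f), max'_image hf, WithBot.map_coe]

theorem AddSubgroup.le_of_forall_exists_sub_lt {M α : Type*} [AddGroup M] [Preorder α]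
    [WellFoundedLT α] {N S : AddSubgroup M} (μ : M → α)
    (h : ∀ y ∈ N, y ∉ S → ∃ z ∈ N ⊓ S, μ (y - z) < μ y) : N ≤ S := by
  suffices ∀ a y, μ y = a → y ∈ N → y ∈ S from fun y => this _ y rfl
  intro a
  induction a using WellFoundedLT.induction with
  | _ a ih =>
    rintro y rfl hyN
    by_contra hyS
    obtain ⟨z, ⟨hzN, hzS⟩, hlt⟩ := h y hyN hyS
    have := ih _ hlt (y - z) rfl (N.sub_mem hyN hzN)
    exact hyS (by simpa using S.add_mem this hzS)

theorem Pi.toLex_comp_lt_toLex_comp {ι α β : Type*} [LT ι] [Preorder α] [Preorder β]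
    {g : α → β} (hg : StrictMono g) {f f' : ι → α} (h : toLex f < toLex f') :
    toLex (g ∘ f) < toLex (g ∘ f') := by
  obtain ⟨i, hi, hlt⟩ := h
  exact ⟨i, fun j hj => congrArg g (hi j hj), hg hlt⟩

theorem Finsupp.toLex_mapDomain_lt_toLex_mapDomain {α β N : Type*} [LinearOrder α]
    [LinearOrder β] [AddCommMonoid N] [LT N] {g : α → β} (hg : StrictMono g) {u v : α →₀ N}
    (h : toLex u < toLex v) : toLex (mapDomain g u) < toLex (mapDomain g v) := by
  obtain ⟨i, hi, hlt⟩ := Finsupp.Lex.lt_iff.1 h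
  refine Finsupp.Lex.lt_iff.2 ⟨g i, fun b hb => ?_, ?_⟩
  · by_cases hbr : b ∈ Set.range g
    · obtain ⟨a, rfl⟩ := hbr
      simpa [mapDomain_apply hg.injective] using hi a (hg.lt_iff_lt.1 hb)
    · simp [mapDomain_of_notMem_range _ _ hbr]
  · simpa [mapDomain_apply hg.injective] using hlt

noncomputable section

open Finsupp

abbrev FreeOIIdx {r : ℕ} (d : Fin r → ℕ) (n : ℕ) : Type := Σ i : Fin r, Fin (d i) ↪o Fin n

namespace FreeOIIdx

variable {r : ℕ} {d : Fin r → ℕ} {m n : ℕ}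

def map (ε : Fin m ↪o Fin n) (b : FreeOIIdx d m) : FreeOIIdx d n :=
  ⟨b.1, b.2.trans ε⟩

theorem map_injective (ε : Fin m ↪o Fin n) : Function.Injective (map (d := d) ε) := by
  rintro ⟨i, π⟩ ⟨i', π'⟩ h
  obtain ⟨rfl, h⟩ := Sigma.mk.inj_iff.1 h
  rw [heq_eq_eq] at h
  exact congrArg _ (DFunLike.ext _ _ fun j => ε.injective (DFunLike.congr_fun h j))

def key (b : FreeOIIdx d n) : Lex (Σ i : Fin r, Lex (Fin (d i) → Fin n)) :=
  toLex ⟨b.1, toLex b.2⟩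

theorem key_injective : Function.Injective (key (d := d) (n := n)) := by
  rintro ⟨i, π⟩ ⟨i', π'⟩ h
  obtain ⟨rfl, h⟩ := Sigma.mk.inj_iff.1 (toLex.injective h)
  rw [heq_eq_eq] at h
  exact congrArg _ (DFunLike.coe_injective (toLex.injective h))

theorem key_map_lt_key_map (ε : Fin m ↪o Fin n) {b b' : FreeOIIdx d m} (h : b.key < b'.key) :
    (b.map ε).key < (b'.map ε).key := by
  obtain ⟨i, π⟩ := b
  obtain ⟨i', π'⟩ := b'
  cases h with
  | left _ _ h => exact Sigma.Lex.left _ _ h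
  | right _ _ h => exact Sigma.Lex.right _ _ (Pi.toLex_comp_lt_toLex_comp ε.strictMono h)

end FreeOIIdx

/-- The element `x^exp e_idx` of the monomial basis of `FreeOI K c d n`. -/
@[ext]
structure OIMonomial {r : ℕ} (c : ℕ) (d : Fin r → ℕ) (n : ℕ) where
  idx : FreeOIIdx d n
  exp : Fin c × Fin n →₀ ℕ

namespace OIMonomial

variable {r c : ℕ} {d : Fin r → ℕ} {m n : ℕ}

theorem rename_injective (ε : Fin m ↪o Fin n) :
    Function.Injective fun p : Fin c × Fin m => (p.1, ε p.2) :=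
  Function.injective_id.prodMap ε.injective

def map (ε : Fin m ↪o Fin n) (x : OIMonomial c d m) : OIMonomial c d n :=
  ⟨x.idx.map ε, x.exp.mapDomain fun p => (p.1, ε p.2)⟩

def mulMonomial (w : Fin c × Fin n →₀ ℕ) (x : OIMonomial c d n) : OIMonomial c d n :=
  ⟨x.idx, w + x.exp⟩

def key (x : OIMonomial c d n) :
    Lex (Σ i : Fin r, Lex (Fin (d i) → Fin n)) ×ₗ Lex (Fin c ×ₗ Fin n →₀ ℕ) :=
  toLex (x.idx.key, toLex (x.exp.mapDomain toLex))

theorem key_injective : Function.Injective (key (c := c) (d := d) (n := n)) := by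
  rintro ⟨b, u⟩ ⟨b', u'⟩ h
  obtain ⟨hb, hu⟩ := Prod.ext_iff.1 (toLex.injective h)
  exact OIMonomial.ext (FreeOIIdx.key_injective hb)
    (mapDomain_injective toLex.injective (toLex.injective hu))

instance : LinearOrder (OIMonomial c d n) := LinearOrder.lift' key key_injective

theorem lt_iff_key_lt {x y : OIMonomial c d n} : x < y ↔ x.key < y.key := Iff.rfl

instance : WellFoundedLT (OIMonomial c d n) :=
  ⟨InvImage.wf key wellFounded_lt⟩

theorem map_strictMono (ε : Fin m ↪o Fin n) : StrictMono (map (c := c) (d := d) ε) := by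
  intro x y h
  have hexp : ∀ u : Fin c × Fin m →₀ ℕ, (u.mapDomain fun p => (p.1, ε p.2)).mapDomain toLex =
      (u.mapDomain toLex).mapDomain fun q => toLex ((ofLex q).1, ε (ofLex q).2) := fun u => by
    rw [← mapDomain_comp, ← mapDomain_comp]; rfl
  have hε : StrictMono fun q : Fin c ×ₗ Fin m => toLex ((ofLex q).1, ε (ofLex q).2) :=
    fun a b hab => by
      rcases Prod.Lex.lt_iff.1 hab with h | ⟨h1, h2⟩
      · exact Prod.Lex.lt_iff.2 (Or.inl h)
      · exact Prod.Lex.lt_iff.2 (Or.inr ⟨h1, ε.strictMono h2⟩)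
  rw [lt_iff_key_lt, key, key, Prod.Lex.toLex_lt_toLex] at h ⊢
  rcases h with h | ⟨h1, h2⟩
  · exact Or.inl (FreeOIIdx.key_map_lt_key_map ε h)
  · refine Or.inr ⟨by rw [map, map, FreeOIIdx.key_injective h1], ?_⟩
    simp only [map, hexp]
    exact toLex_mapDomain_lt_toLex_mapDomain hε h2

theorem mulMonomial_strictMono (w : Fin c × Fin n →₀ ℕ) :
    StrictMono (mulMonomial (d := d) w) := by
  intro x y h
  rw [lt_iff_key_lt, key, key, Prod.Lex.toLex_lt_toLex] at h ⊢
  rcases h with h | ⟨h1, h2⟩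
  · exact Or.inl h
  · refine Or.inr ⟨h1, ?_⟩
    simp only [mulMonomial, mapDomain_add, toLex_add]
    exact (add_lt_add_iff_left _).2 h2

def OIDvd (s t : Σ n, OIMonomial c d n) : Prop :=
  ∃ ε : Fin s.1 ↪o Fin t.1, (s.2.map ε).idx = t.2.idx ∧ (s.2.map ε).exp ≤ t.2.exp

open Classical in
def letter (t : Σ n, OIMonomial c d n) (j : Fin t.1) : Bool × (Fin c → ℕ) :=
  (decide (j ∈ Set.range t.2.idx.2), fun i => t.2.exp (i, j))

theorem oiDvd_of_sublistForall₂ {s t : Σ n, OIMonomial c d n} (hi : s.2.idx.1 = t.2.idx.1)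
    (h : List.SublistForall₂ (· ≤ ·) (List.ofFn (letter s)) (List.ofFn (letter t))) :
    OIDvd s t := by
  obtain ⟨m, ⟨⟨i, π⟩, u⟩⟩ := s
  obtain ⟨n, ⟨⟨i', π'⟩, v⟩⟩ := t
  dsimp only at hi
  subst hi
  obtain ⟨ε, hε⟩ := h.exists_orderEmbedding_of_ofFn
  refine ⟨ε, ?_, fun p => ?_⟩
  · refine congrArg (Sigma.mk i) (OrderEmbedding.eq_of_range_subset ?_)
    rintro _ ⟨k, rfl⟩
    simpa [letter, Bool.le_iff_imp] using (hε (π k)).1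
  · by_cases hp : p ∈ Set.range fun q : Fin c × Fin m => (q.1, ε q.2)
    · obtain ⟨⟨i, j⟩, rfl⟩ := hp
      exact (Finsupp.mapDomain_apply (rename_injective ε) u (i, j)).trans_le
        (by simpa [letter] using (hε j).2 i)
    · simp [map, Finsupp.mapDomain_of_notMem_range _ _ hp]

theorem oiDvd_wellQuasiOrdered : WellQuasiOrdered (OIDvd (c := c) (d := d)) := by
  have hwords : WellQuasiOrdered (List.SublistForall₂ (· ≤ ·) :
      List (Bool × (Fin c → ℕ)) → List (Bool × (Fin c → ℕ)) → Prop) := by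
    have hletters := Set.partiallyWellOrderedOn_univ_iff.2
      (wellQuasiOrdered_le (α := Bool × (Fin c → ℕ)))
    rw [← Set.partiallyWellOrderedOn_univ_iff]
    simpa using hletters.partiallyWellOrderedOn_sublistForall₂ (· ≤ ·)
  intro f
  obtain ⟨a, b, hab, hi, hw⟩ := (Finite.wellQuasiOrdered (· = ·)).prod hwords
    fun k => ((f k).2.idx.1, List.ofFn (letter (f k)))
  exact ⟨a, b, hab, oiDvd_of_sublistForall₂ hi hw⟩

end OIMonomial

namespace FreeOI

variable {K : Type} [Field K] {r c : ℕ} {d : Fin r → ℕ} {m n : ℕ}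

def monomialCoeff (x : OIMonomial c d n) (f : FreeOI K c d n) : K := (f x.idx).coeff x.exp

def monomialSupport (f : FreeOI K c d n) : Finset (OIMonomial c d n) :=
  f.support.biUnion fun b => (f b).support.image (OIMonomial.mk b)

def leadingMonomial (f : FreeOI K c d n) : WithBot (OIMonomial c d n) :=
  (monomialSupport f).max

theorem mem_monomialSupport {x : OIMonomial c d n} {f : FreeOI K c d n} :
    x ∈ monomialSupport f ↔ monomialCoeff x f ≠ 0 := by
  simp only [monomialSupport, Finset.mem_biUnion, Finset.mem_image, Finsupp.mem_support_iff,
    MvPolynomial.mem_support_iff, monomialCoeff]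
  constructor
  · rintro ⟨b, -, u, hu, rfl⟩
    exact hu
  · intro hx
    exact ⟨x.idx, fun h => hx (by simp [h]), x.exp, hx, rfl⟩

@[simp]
theorem monomialCoeff_sub (x : OIMonomial c d n) (f g : FreeOI K c d n) :
    monomialCoeff x (f - g) = monomialCoeff x f - monomialCoeff x g := by
  simp [monomialCoeff]

theorem leadingMonomial_eq_bot {f : FreeOI K c d n} : leadingMonomial f = ⊥ ↔ f = 0 := by
  rw [leadingMonomial, Finset.max_eq_bot, Finset.eq_empty_iff_forall_notMem]
  simp only [mem_monomialSupport, ne_eq, not_not]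
  refine ⟨fun h => Finsupp.ext fun b => MvPolynomial.ext _ _ fun u => h ⟨b, u⟩, ?_⟩
  rintro rfl x
  simp [monomialCoeff]

theorem monomialCoeff_ne_zero_of_leadingMonomial_eq {f : FreeOI K c d n} {t : OIMonomial c d n}
    (h : leadingMonomial f = t) : monomialCoeff t f ≠ 0 :=
  mem_monomialSupport.1 (Finset.mem_of_max h)

theorem leadingMonomial_sub_lt {f g : FreeOI K c d n} {t : OIMonomial c d n}
    (hf : leadingMonomial f = t) (hg : leadingMonomial g = t)
    (hc : monomialCoeff t f = monomialCoeff t g) : leadingMonomial (f - g) < t := by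
  rw [leadingMonomial, Finset.max_eq_sup_coe, Finset.sup_lt_iff (WithBot.bot_lt_coe t)]
  intro x hx
  rw [mem_monomialSupport, monomialCoeff_sub] at hx
  have hle : x ≤ t := by
    by_cases hxf : monomialCoeff x f = 0
    · exact Finset.le_max_of_eq (mem_monomialSupport.2 fun hxg => hx (by rw [hxf, hxg, sub_zero]))
        hg
    · exact Finset.le_max_of_eq (mem_monomialSupport.2 hxf) hf
  exact WithBot.coe_lt_coe.2 (hle.lt_of_ne (by rintro rfl; exact hx (sub_eq_zero.2 hc)))

theorem freeOIMap_eq_mapDomain (ε : Fin m ↪o Fin n) (f : FreeOI K c d m) :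
    freeOIMap K c d ε f =
      mapDomain (FreeOIIdx.map ε) (mapRange (POImap K c ε) (map_zero _) f) := by
  rw [freeOIMap, mapDomain, sum_mapRange_index fun _ => single_zero _]
  rfl

theorem freeOIMap_apply_map (ε : Fin m ↪o Fin n) (f : FreeOI K c d m) (b : FreeOIIdx d m) :
    freeOIMap K c d ε f (b.map ε) = POImap K c ε (f b) := by
  rw [freeOIMap_eq_mapDomain, mapDomain_apply (FreeOIIdx.map_injective ε), mapRange_apply]

theorem freeOIMap_apply_of_notMem_range (ε : Fin m ↪o Fin n) (f : FreeOI K c d m)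
    {b : FreeOIIdx d n} (hb : b ∉ Set.range (FreeOIIdx.map ε)) : freeOIMap K c d ε f b = 0 := by
  rw [freeOIMap_eq_mapDomain, mapDomain_of_notMem_range _ _ hb]

theorem monomialCoeff_freeOIMap_map (ε : Fin m ↪o Fin n) (f : FreeOI K c d m)
    (x : OIMonomial c d m) :
    monomialCoeff (x.map ε) (freeOIMap K c d ε f) = monomialCoeff x f := by
  rw [monomialCoeff, OIMonomial.map, freeOIMap_apply_map, POImap]
  exact coeff_rename_mapDomain _ (OIMonomial.rename_injective ε) _ _

theorem monomialSupport_freeOIMap (ε : Fin m ↪o Fin n) (f : FreeOI K c d m) :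
    monomialSupport (freeOIMap K c d ε f) = (monomialSupport f).image (OIMonomial.map ε) := by
  ext ⟨b, u⟩
  rw [mem_monomialSupport, Finset.mem_image]
  refine ⟨fun hx => ?_, ?_⟩
  · by_cases hb : b ∈ Set.range (FreeOIIdx.map ε)
    · obtain ⟨b, rfl⟩ := hb
      rw [monomialCoeff, freeOIMap_apply_map, POImap] at hx
      obtain ⟨u, rfl, hu⟩ := coeff_rename_ne_zero _ _ _ hx
      exact ⟨⟨b, u⟩, mem_monomialSupport.2 hu, rfl⟩
    · exact absurd (by simp [monomialCoeff, freeOIMap_apply_of_notMem_range ε f hb]) hx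
  · rintro ⟨y, hy, hyx⟩
    rwa [← hyx, monomialCoeff_freeOIMap_map, ← mem_monomialSupport]

theorem leadingMonomial_freeOIMap (ε : Fin m ↪o Fin n) (f : FreeOI K c d m) :
    leadingMonomial (freeOIMap K c d ε f) = (leadingMonomial f).map (OIMonomial.map ε) := by
  rw [leadingMonomial, monomialSupport_freeOIMap,
    Finset.max_image_of_monotone (OIMonomial.map_strictMono ε).monotone]
  rfl

theorem monomialCoeff_monomial_smul (w : Fin c × Fin n →₀ ℕ) (q : K) (f : FreeOI K c d n)
    (x : OIMonomial c d n) :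
    monomialCoeff (x.mulMonomial w) (MvPolynomial.monomial w q • f) = q * monomialCoeff x f :=
  coeff_monomial_mul _ _ _ _

theorem monomialSupport_monomial_smul (w : Fin c × Fin n →₀ ℕ) {q : K} (hq : q ≠ 0)
    (f : FreeOI K c d n) :
    monomialSupport (MvPolynomial.monomial w q • f) =
      (monomialSupport f).image (OIMonomial.mulMonomial w) := by
  ext ⟨b, u⟩
  rw [mem_monomialSupport, Finset.mem_image]
  refine ⟨fun hx => ?_, ?_⟩
  · rw [monomialCoeff, Finsupp.smul_apply, smul_eq_mul, coeff_monomial_mul'] at hx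
    split_ifs at hx with hw
    · refine ⟨⟨b, u - w⟩, mem_monomialSupport.2 (right_ne_zero_of_mul hx), ?_⟩
      simp [OIMonomial.mulMonomial, add_tsub_cancel_of_le hw]
    · exact absurd rfl hx
  · rintro ⟨y, hy, hyx⟩
    rw [← hyx, monomialCoeff_monomial_smul]
    exact mul_ne_zero hq (mem_monomialSupport.1 hy)

theorem leadingMonomial_monomial_smul (w : Fin c × Fin n →₀ ℕ) {q : K} (hq : q ≠ 0)
    (f : FreeOI K c d n) :
    leadingMonomial (MvPolynomial.monomial w q • f) =
      (leadingMonomial f).map (OIMonomial.mulMonomial w) := by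
  rw [leadingMonomial, monomialSupport_monomial_smul w hq,
    Finset.max_image_of_monotone (OIMonomial.mulMonomial_strictMono w).monotone]
  rfl

def IsOISubmodule (S : ∀ n, Submodule (POI K c n) (FreeOI K c d n)) : Prop :=
  ∀ (m n : ℕ) (ε : Fin m ↪o Fin n) (x : FreeOI K c d m), x ∈ S m → freeOIMap K c d ε x ∈ S n

theorem isOISubmodule_ker {rF : ℕ} {dF : Fin rF → ℕ}
    {φ : ∀ n, FreeOI K c d n →ₗ[POI K c n] FreeOI K c dF n}
    (hφ : ∀ {m n : ℕ} (ε : Fin m ↪o Fin n) (x : FreeOI K c d m),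
      φ n (freeOIMap K c d ε x) = freeOIMap K c dF ε (φ m x)) :
    IsOISubmodule fun n => LinearMap.ker (φ n) := by
  intro m n ε x hx
  rw [LinearMap.mem_ker] at hx
  rw [LinearMap.mem_ker, hφ, hx, freeOIMap_eq_mapDomain]
  simp

theorem exists_leadingMonomial_sub_smul_freeOIMap_lt {g : FreeOI K c d m}
    {s : OIMonomial c d m} (hg : leadingMonomial g = s) {y : FreeOI K c d n}
    {t : OIMonomial c d n} (hy : leadingMonomial y = t) (hst : OIMonomial.OIDvd ⟨m, s⟩ ⟨n, t⟩) :
    ∃ (a : POI K c n) (ε : Fin m ↪o Fin n), leadingMonomial (y - a • freeOIMap K c d ε g) < t := by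
  obtain ⟨ε, hidx, hexp⟩ := hst
  set w := t.exp - (s.map ε).exp
  have ht : (s.map ε).mulMonomial w = t := OIMonomial.ext hidx (tsub_add_cancel_of_le hexp)
  have hs := monomialCoeff_ne_zero_of_leadingMonomial_eq hg
  set q := monomialCoeff t y / monomialCoeff s g
  have hq : q ≠ 0 := div_ne_zero (monomialCoeff_ne_zero_of_leadingMonomial_eq hy) hs
  refine ⟨MvPolynomial.monomial w q, ε, leadingMonomial_sub_lt hy ?_ ?_⟩
  · rw [leadingMonomial_monomial_smul w hq, leadingMonomial_freeOIMap, hg]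
    exact congrArg _ ht
  · calc monomialCoeff t y = q * monomialCoeff s g := (div_mul_cancel₀ _ hs).symm
      _ = monomialCoeff ((s.map ε).mulMonomial w)
            (MvPolynomial.monomial w q • freeOIMap K c d ε g) := by
        rw [monomialCoeff_monomial_smul, monomialCoeff_freeOIMap_map]
      _ = _ := by rw [ht]

theorem IsOISubmodule.exists_finite_generating_set
    {N : ∀ n, Submodule (POI K c n) (FreeOI K c d n)} (hN : IsOISubmodule N) :
    ∃ G : Set (Σ n, FreeOI K c d n), G.Finite ∧ (∀ g ∈ G, g.2 ∈ N g.1) ∧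
      ∀ S, IsOISubmodule S → (∀ g ∈ G, g.2 ∈ S g.1) → ∀ n, N n ≤ S n := by
  set leads : Set (Σ n, OIMonomial c d n) := {t | ∃ x ∈ N t.1, leadingMonomial x = t.2}
  obtain ⟨F, hFL, hF⟩ := OIMonomial.oiDvd_wellQuasiOrdered.exists_finset_forall_exists_rel leads
  choose gen hgenN hgen using fun a : F => hFL a.2
  refine ⟨Set.range fun a : F => (⟨a.1.1, gen a⟩ : Σ n, FreeOI K c d n), Set.finite_range _,
    ?_, ?_⟩
  · rintro _ ⟨a, rfl⟩
    exact hgenN a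
  intro S hS hgenS n
  refine (Submodule.toAddSubgroup_le _ _).1
    (AddSubgroup.le_of_forall_exists_sub_lt leadingMonomial fun y hyN hyS => ?_)
  have hy : y ≠ 0 := by rintro rfl; exact hyS (zero_mem _)
  obtain ⟨t, ht⟩ := WithBot.ne_bot_iff_exists.1 (mt leadingMonomial_eq_bot.1 hy)
  obtain ⟨a, haF, hdvd⟩ := hF ⟨n, t⟩ ⟨y, hyN, ht.symm⟩
  obtain ⟨p, ε, hlt⟩ := exists_leadingMonomial_sub_smul_freeOIMap_lt (hgen ⟨a, haF⟩) ht.symm hdvd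
  exact ⟨_, ⟨(N n).smul_mem p (hN _ _ ε _ (hgenN _)),
    (S n).smul_mem p (hS _ _ ε _ (hgenS _ ⟨⟨a, haF⟩, rfl⟩))⟩, ht ▸ hlt⟩

end FreeOI

end

/-- Let `K` be a field, `c ≥ 0`, and let `φ : G → F` be a morphism
of finitely generated free OI-modules over `P = P^{OI,c}` (with `G = ⊕_{i=1}^{rG}
F^{OI,dG_i}` and `F = ⊕_{i=1}^{rF} F^{OI,dF_i}`): a family of `P_n`-linear maps
commuting with the OI-structure maps. Then the kernel of `φ` — the OI-submodule of
`G` with width-`n` component `ker (φ n)` — is generated by a finite subset: there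
are finitely many elements `g_1, …, g_k` of the kernel, in widths `w_1, …, w_k`,
such that every OI-stable family of submodules containing them contains the whole
kernel. (Moreover such a finite generating set can be computed in finitely many
steps.) -/
theorem stmt_8 (K : Type) [Field K] (c : ℕ) {rG rF : ℕ}
    (dG : Fin rG → ℕ) (dF : Fin rF → ℕ)
    (φ : ∀ n, FreeOI K c dG n →ₗ[POI K c n] FreeOI K c dF n)
    (hφnat : ∀ {m n : ℕ} (ε : Fin m ↪o Fin n) (x : FreeOI K c dG m),
      φ n (freeOIMap K c dG ε x) = freeOIMap K c dF ε (φ m x)) :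
    ∃ (k : ℕ) (w : Fin k → ℕ) (g : ∀ i, FreeOI K c dG (w i)),
      (∀ i, φ (w i) (g i) = 0) ∧
      ∀ S : ∀ n, Submodule (POI K c n) (FreeOI K c dG n),
        (∀ (m n : ℕ) (ε : Fin m ↪o Fin n) (x : FreeOI K c dG m),
          x ∈ S m → freeOIMap K c dG ε x ∈ S n) →
        (∀ i, g i ∈ S (w i)) →
        ∀ (n : ℕ) (x : FreeOI K c dG n), φ n x = 0 → x ∈ S n := by
  obtain ⟨G, hGfin, hGker, hG⟩ :=
    (FreeOI.isOISubmodule_ker hφnat).exists_finite_generating_set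
  obtain ⟨k, e, rfl⟩ := hGfin.fin_embedding
  refine ⟨k, fun i => (e i).1, fun i => (e i).2, fun i => hGker _ ⟨i, rfl⟩, ?_⟩
  intro S hS hgS n x hx
  exact hG S hS (by rintro _ ⟨i, rfl⟩; exact hgS i) n hx
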